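/- arXiv:1008.2017 — 5 statements merged into one kernel-verified Lean document; each statement's English description precedes it below -/
import Mathlib

section
/- Let U and V be closed complemented subspaces of a Banach space Z forming a Fredholm pair (i.e., U ∩ V is finite-dimensional and U + V is closed with finite codimension). If K ⊆ Z is a finite-dimensional subspace, then (U + K, V) is also a Fredholm pair. -/
/-- A pair of subspaces `(U, V)` of a Banach space `Z` is *Fredholm* if `U ∩ V` is
finite dimensional and `U + V` is closed and of finite codimension in `Z`. -/
def FredholmPair {Z : Type*} [NormedAddCommGroup Z] [NormedSpace ℝ Z]
    (U V : Submodule ℝ Z) : Prop :=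
  FiniteDimensional ℝ ↥(U ⊓ V) ∧ IsClosed ((U ⊔ V : Submodule ℝ Z) : Set Z) ∧
    FiniteDimensional ℝ (Z ⧸ (U ⊔ V))

/-- Let `U` and `V` be closed subspaces of a Banach space `Z` forming a
Fredholm pair.  If `K ⊆ Z` is a finite-dimensional subspace, then `(U + K, V)` is also
a Fredholm pair. -/
theorem stmt_3 {Z : Type*} [NormedAddCommGroup Z] [NormedSpace ℝ Z] [CompleteSpace Z]
    (U V : Submodule ℝ Z) (hU : IsClosed (U : Set Z)) (hV : IsClosed (V : Set Z))
    (hUV : FredholmPair U V)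
    (K : Submodule ℝ Z) (hK : FiniteDimensional ℝ ↥K) :
    FredholmPair (U ⊔ K) V := by
  obtain ⟨h1, h2, h3⟩ := hUV
  refine ⟨?_, ?_, ?_⟩
  · -- finite dimensionality of ((U ⊔ K) ⊓ V)
    set S := (U ⊔ K) ⊓ V with hS
    rw [show FiniteDimensional ℝ ↥S = Module.Finite ℝ ↥S from rfl, Module.Finite.iff_fg]
    apply Submodule.fg_of_fg_map_of_fg_inf_ker U.mkQ
    · -- image of S in Z ⧸ U is contained in image of K, hence f.g.
      have hle : S.map U.mkQ ≤ K.map U.mkQ := by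
        refine le_trans (Submodule.map_mono (le_trans inf_le_left le_rfl)) ?_
        rw [Submodule.map_sup]
        simp [Submodule.mkQ_map_self]
      have : FiniteDimensional ℝ ↥(K.map U.mkQ) :=
        Module.Finite.map K U.mkQ
      have : FiniteDimensional ℝ ↥(S.map U.mkQ) :=
        Submodule.finiteDimensional_of_le hle
      rwa [← Module.Finite.iff_fg]
    · -- S ⊓ ker mkQ = S ⊓ U ≤ U ⊓ V is finite dimensional
      have heq : S ⊓ LinearMap.ker U.mkQ ≤ U ⊓ V := by
        rw [Submodule.ker_mkQ]
        refine le_inf inf_le_right ?_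
        exact le_trans inf_le_left inf_le_right
      have : FiniteDimensional ℝ ↥(S ⊓ LinearMap.ker U.mkQ) :=
        Submodule.finiteDimensional_of_le heq
      rwa [← Module.Finite.iff_fg]
  · -- closedness of (U ⊔ K) ⊔ V
    have hWK : (U ⊔ K) ⊔ V = (U ⊔ V) ⊔ K := by
      rw [sup_comm U K, sup_assoc, sup_comm K (U ⊔ V)]
    rw [hWK]
    set W := U ⊔ V with hW
    haveI : IsClosed (W : Set Z) := h2
    have hker : LinearMap.ker W.mkQ = W := Submodule.ker_mkQ W
    have hpre : ((W ⊔ K : Submodule ℝ Z) : Set Z) = W.mkQ ⁻¹' (K.map W.mkQ) := by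
      ext x
      simp only [Set.mem_preimage, SetLike.mem_coe]
      constructor
      · intro hx
        have : x ∈ Submodule.comap W.mkQ (K.map W.mkQ) := by
          rw [Submodule.comap_map_eq, hker, sup_comm]
          exact hx
        exact this
      · intro hx
        have : x ∈ Submodule.comap W.mkQ (K.map W.mkQ) := hx
        rw [Submodule.comap_map_eq, hker, sup_comm] at this
        exact this
    rw [hpre]
    have hfin : FiniteDimensional ℝ ↥(K.map W.mkQ) := Module.Finite.map K W.mkQ
    have hclosed : IsClosed ((K.map W.mkQ : Submodule ℝ (Z ⧸ W)) : Set (Z ⧸ W)) :=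
      Submodule.closed_of_finiteDimensional _
    exact hclosed.preimage (continuous_quot_mk)
  · -- finite codimension
    have hWK : (U ⊔ K) ⊔ V = (U ⊔ V) ⊔ K := by
      rw [sup_comm U K, sup_assoc, sup_comm K (U ⊔ V)]
    rw [hWK]
    set W := U ⊔ V with hW
    have hle : W ≤ W ⊔ K := le_sup_left
    let f : (Z ⧸ W) →ₗ[ℝ] (Z ⧸ (W ⊔ K)) :=
      Submodule.mapQ W (W ⊔ K) LinearMap.id (by simp [hle])
    have hsurj : Function.Surjective f := by
      intro y
      obtain ⟨x, rfl⟩ := Submodule.mkQ_surjective (W ⊔ K) y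
      exact ⟨W.mkQ x, by simp [f, Submodule.mapQ_apply]⟩
    exact Module.Finite.of_surjective f hsurj
end

section
/- Let H be a Hilbert space and let P, Q be bounded projections on H such that P - Q is a compact operator. If (im P, ker Q) is a Fredholm pair, then for any bounded projection P' with P' - P compact, (im P', ker Q) is also a Fredholm pair. -/
open Filter Topology

theorem norm_le_norm_of_inner_sub_left_eq_zero {H : Type*} [NormedAddCommGroup H]
    [InnerProductSpace ℝ H] {x y : H} (h : inner ℝ (x - y) x = 0) : ‖x‖ ≤ ‖y‖ := by
  rcases (norm_nonneg x).eq_or_lt with hx | hx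
  · exact hx ▸ norm_nonneg y
  refine le_of_mul_le_mul_right ?_ hx
  rw [inner_sub_left, sub_eq_zero] at h
  calc ‖x‖ * ‖x‖ = inner ℝ x x := (real_inner_self_eq_norm_mul_norm x).symm
    _ = inner ℝ y x := h
    _ ≤ ‖y‖ * ‖x‖ := real_inner_le_norm y x

namespace IsCompactOperator

section Banach

variable {E : Type*} [NormedAddCommGroup E] [NormedSpace ℝ E] {C : E →L[ℝ] E}

theorem finiteDimensional_of_norm_le_norm_apply [CompleteSpace E] (hC : IsCompactOperator C)
    {S : Submodule ℝ E} (hS : IsClosed (S : Set E)) (hle : ∀ x ∈ S, ‖x‖ ≤ ‖C x‖) :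
    FiniteDimensional ℝ S := by
  have : CompleteSpace S := hS.completeSpace_coe
  have hanti : AntilipschitzWith 1 (C.comp S.subtypeL) :=
    (C.comp S.subtypeL).antilipschitz_of_bound fun x => by simpa using hle x x.2
  have hemb := hanti.isClosedEmbedding (C.comp S.subtypeL).uniformContinuous
  obtain ⟨K, hK, hCK⟩ :=
    (hC : IsCompactOperator (C : E →ₗ[ℝ] E)).image_closedBall_subset_compact 1
  refine FiniteDimensional.of_isCompact_closedBall₀ ℝ one_pos <|
    (hemb.isCompact_preimage hK).of_isClosed_subset Metric.isClosed_closedBall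
      fun x hx => hCK ⟨x, by simpa using hx, rfl⟩

theorem finiteDimensional_ker_one_sub [CompleteSpace E] (hC : IsCompactOperator C) :
    FiniteDimensional ℝ (1 - C : E →L[ℝ] E).ker :=
  hC.finiteDimensional_of_norm_le_norm_apply (ContinuousLinearMap.isClosed_ker _) fun x hx =>
    (congrArg norm (sub_eq_zero.1 (hx : x - C x = 0))).le

theorem antilipschitz_one_sub_comp_subtypeL (hC : IsCompactOperator C) {M : Submodule ℝ E}
    (hM : IsClosed (M : Set E)) (hMC : Disjoint M (1 - C : E →L[ℝ] E).ker) :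
    ∃ K, AntilipschitzWith K ((1 - C : E →L[ℝ] E).comp M.subtypeL) := by
  rw [antilipschitzWith_iff_exists_mul_le_norm]
  by_contra! hsmall
  have hunit : ∀ n : ℕ, ∃ u ∈ M, ‖u‖ = 1 ∧ ‖u - C u‖ < 1 / (n + 1) := by
    intro n
    obtain ⟨x, hx⟩ := hsmall (1 / (n + 1)) (by positivity)
    have hx0 : (x : E) ≠ 0 := by rintro h; simp [h] at hx
    refine ⟨‖(x : E)‖⁻¹ • (x : E), M.smul_mem _ x.2, norm_smul_inv_norm hx0, ?_⟩
    rw [map_smul, ← smul_sub, norm_smul, norm_inv, norm_norm,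
      inv_mul_lt_iff₀ (norm_pos_iff.2 hx0), mul_comm]
    simpa using hx
  -- a subsequence of `u` converges to a unit vector of `M` fixed by `C`
  choose u huM hu1 hsub using hunit
  obtain ⟨K, hK, hCK⟩ :=
    (hC : IsCompactOperator (C : E →ₗ[ℝ] E)).image_closedBall_subset_compact 1
  obtain ⟨y, -, φ, hφ, hCy⟩ := hK.tendsto_subseq fun n => hCK ⟨u n, by simp [hu1 n], rfl⟩
  have hsub0 : Tendsto (fun n => u n - C (u n)) atTop (𝓝 0) :=
    squeeze_zero_norm (fun n => (hsub n).le) tendsto_one_div_add_atTop_nhds_zero_nat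
  have huy : Tendsto (u ∘ φ) atTop (𝓝 y) := by
    simpa [Function.comp_def] using (hsub0.comp hφ.tendsto_atTop).add hCy
  have hyM : y ∈ M := hM.mem_of_tendsto huy (Eventually.of_forall fun n => huM _)
  have hy1 : ‖y‖ = 1 := tendsto_nhds_unique huy.norm (by simp [hu1])
  have hCyy : C y = y := tendsto_nhds_unique ((C.continuous.tendsto y).comp huy) hCy
  have hy0 : y = 0 := hMC.le_bot ⟨hyM, by simp [hCyy]⟩
  simp [hy0] at hy1

end Banach

section Hilbert

variable {H : Type*} [NormedAddCommGroup H] [InnerProductSpace ℝ H] [CompleteSpace H]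
  {C : H →L[ℝ] H}

theorem isClosed_range_one_sub (hC : IsCompactOperator C) :
    IsClosed ((1 - C : H →L[ℝ] H).range : Set H) := by
  set T : H →L[ℝ] H := 1 - C
  obtain ⟨K, hK⟩ := hC.antilipschitz_one_sub_comp_subtypeL (Submodule.isClosed_orthogonal T.ker)
    T.ker.orthogonal_disjoint.symm
  have hrange : (T.range : Set H) = Set.range (T.comp T.kerᗮ.subtypeL) := by
    ext x
    constructor
    · rintro ⟨z, rfl⟩
      obtain ⟨n, hn, m, hm, rfl⟩ := T.ker.exists_add_mem_mem_orthogonal z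
      have hTn : T n = 0 := hn
      exact ⟨⟨m, hm⟩, by simp [hTn]⟩
    · rintro ⟨m, rfl⟩
      exact ⟨m, rfl⟩
  rw [hrange]
  exact hK.isClosed_range (T.comp _).uniformContinuous

theorem finiteDimensional_quotient_range_one_sub (hC : IsCompactOperator C) :
    FiniteDimensional ℝ (H ⧸ (1 - C : H →L[ℝ] H).range) := by
  set W := (1 - C : H →L[ℝ] H).range
  have : CompleteSpace W := hC.isClosed_range_one_sub.completeSpace_coe
  have : FiniteDimensional ℝ Wᗮ :=
    hC.finiteDimensional_of_norm_le_norm_apply (Submodule.isClosed_orthogonal W) fun x hx =>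
      norm_le_norm_of_inner_sub_left_eq_zero ((W.mem_orthogonal x).1 hx _ ⟨x, rfl⟩)
  exact Module.Finite.equiv (W.quotientEquivOfIsCompl Wᗮ W.isCompl_orthogonal).symm

end Hilbert

end IsCompactOperator

theorem IsIdempotentElem.mul_one_sub_sub_sq {R : Type*} [Ring R] {p q : R}
    (hp : IsIdempotentElem p) (hq : IsIdempotentElem q) :
    q * (1 - (p - q) ^ 2) = q * p * q := by
  have hexp : q * (1 - (p - q) ^ 2) = q - q * (p * p) + q * p * q + q * q * p - q * q * q := by
    noncomm_ring
  rw [hexp, hp.eq, hq.eq, hq.eq]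
  abel

theorem LinearMap.range_one_sub_sub_sq_le {R M : Type*} [Ring R] [AddCommGroup M] [Module R M]
    {p q : Module.End R M} (hp : IsIdempotentElem p) (hq : IsIdempotentElem q) :
    LinearMap.range (1 - (p - q) ^ 2) ≤ LinearMap.range p ⊔ LinearMap.ker q := by
  rintro _ ⟨z, rfl⟩
  have hker : (1 - (p - q) ^ 2 : Module.End R M) z - p (q z) ∈ LinearMap.ker q := by
    rw [LinearMap.mem_ker, map_sub, ← Module.End.mul_apply, hp.mul_one_sub_sub_sq hq]
    simp only [Module.End.mul_apply, sub_self]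
  rw [← add_sub_cancel (p (q z)) ((1 - (p - q) ^ 2 : Module.End R M) z)]
  exact add_mem (Submodule.mem_sup_left ⟨q z, rfl⟩) (Submodule.mem_sup_right hker)

theorem stmt_5_general {H : Type*} [NormedAddCommGroup H] [InnerProductSpace ℝ H] [CompleteSpace H]
    (P Q P' : H →L[ℝ] H)
    (hQ : ∀ x, Q (Q x) = Q x) (hP' : ∀ x, P' (P' x) = P' x)
    (hPQ : IsCompactOperator (⇑(P - Q)))
    (hP'P : IsCompactOperator (⇑(P' - P))) :
    FredholmPair (LinearMap.range (P' : H →ₗ[ℝ] H)) (LinearMap.ker (Q : H →ₗ[ℝ] H)) := by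
  have hK : IsCompactOperator ⇑(P' - Q) := by
    simpa only [← FunLike.coe_add, sub_add_sub_cancel] using hP'P.add hPQ
  have hK2 : IsCompactOperator ⇑((P' - Q) ^ 2) := by
    rw [pow_two, FunLike.coe_mul_eq_comp]
    exact hK.comp_clm _
  have hrange : (1 - (P' - Q) ^ 2 : H →L[ℝ] H).range ≤
      LinearMap.range (P' : H →ₗ[ℝ] H) ⊔ LinearMap.ker (Q : H →ₗ[ℝ] H) :=
    LinearMap.range_one_sub_sub_sq_le (LinearMap.ext hP') (LinearMap.ext hQ)
  have hfix : LinearMap.range (P' : H →ₗ[ℝ] H) ⊓ LinearMap.ker (Q : H →ₗ[ℝ] H) ≤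
      (1 - (P' - Q) : H →L[ℝ] H).ker := by
    rintro _ ⟨⟨y, rfl⟩, hy⟩
    have hQy : Q (P' y) = 0 := hy
    simp [hP', hQy]
  have hfixFin := hK.finiteDimensional_ker_one_sub
  have hcodim := hK2.finiteDimensional_quotient_range_one_sub
  exact ⟨Submodule.finiteDimensional_of_le hfix,
    Submodule.isClosed_mono_of_finiteDimensional_quotient hK2.isClosed_range_one_sub hrange,
    Submodule.CoFG.of_le hrange hcodim⟩

/-- Let `H` be a Hilbert space and `P, Q` bounded projections on `H` such
that `P - Q` is a compact operator.  If `(im P, ker Q)` is a Fredholm pair, then for any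
bounded projection `P'` with `P' - P` compact, `(im P', ker Q)` is also a Fredholm
pair. -/
theorem stmt_5 {H : Type*} [NormedAddCommGroup H] [InnerProductSpace ℝ H] [CompleteSpace H]
    (P Q P' : H →L[ℝ] H)
    (hP : ∀ x, P (P x) = P x) (hQ : ∀ x, Q (Q x) = Q x) (hP' : ∀ x, P' (P' x) = P' x)
    (hPQ : IsCompactOperator (⇑(P - Q)))
    (hFred : FredholmPair (LinearMap.range (P : H →ₗ[ℝ] H)) (LinearMap.ker (Q : H →ₗ[ℝ] H)))
    (hP'P : IsCompactOperator (⇑(P' - P))) :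
    FredholmPair (LinearMap.range (P' : H →ₗ[ℝ] H)) (LinearMap.ker (Q : H →ₗ[ℝ] H)) :=
  stmt_5_general P Q P' hQ hP' hPQ hP'P
end

section
/- Let A : dom(A) ⊆ H → H be an invertible self-adjoint operator on a Hilbert space H. For x ∈ H¹(S¹, H) ∩ L²(S¹, dom(A)) satisfying (d/dt + A)x = y with y ∈ L²(S¹, H), the estimate ‖dx/dt‖_{L²(S¹,H)} ≤ C‖y‖_{L²(S¹,H)} holds with a constant C depending only on A. -/
/-!
Write `g = A x`, so that `y = x' + g`. Then
`‖y‖² = ‖x'‖² + 2 Re ⟪x', g⟫ + ‖g‖²`, and since `A` is symmetric the cross term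
`2 Re ⟪x', A x⟫` is the derivative of `Re ⟪A x, x⟫`; it integrates to zero over a period.
Hence `∫ ‖x'‖² ≤ ∫ ‖y‖²`, i.e. the estimate holds with `C = 1`.
-/

open scoped InnerProductSpace

section SymmetricPath

variable {𝕜 E : Type*} [RCLike 𝕜] [NormedAddCommGroup E] [InnerProductSpace 𝕜 E]
  [NormedSpace ℝ E] [IsScalarTower ℝ 𝕜 E] {x g : ℝ → E}

theorem hasDerivAt_inner_sub_self {x' : E} {t : ℝ} (hg : ContinuousAt g t)
    (hx : HasDerivAt x x' t) :
    HasDerivAt (fun s => ⟪g s, x s - x t⟫_𝕜) ⟪g t, x'⟫_𝕜 t := by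
  rw [hasDerivAt_iff_tendsto_slope]
  have hslope : slope (fun s => ⟪g s, x s - x t⟫_𝕜) t = fun s => ⟪g s, slope x t s⟫_𝕜 := by
    funext s
    rw [slope_def_module, slope_def_module, sub_self, inner_zero_right, sub_zero,
      ← algebraMap_smul 𝕜 (s - t)⁻¹ (x s - x t), inner_smul_right, RCLike.real_smul_eq_coe_mul,
      RCLike.algebraMap_eq_ofReal]
  rw [hslope]
  exact (hg.tendsto.mono_left nhdsWithin_le_nhds).inner (hasDerivAt_iff_tendsto_slope.mp hx)

/-- `g s = A (x s)` for a symmetric `A` makes `⟪g, x⟫` differentiable although `g` need not be. -/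
theorem hasDerivAt_inner_of_symm (hsym : ∀ s t, ⟪g s, x t⟫_𝕜 = ⟪x s, g t⟫_𝕜) {x' : E} {t : ℝ}
    (hg : ContinuousAt g t) (hx : HasDerivAt x x' t) :
    HasDerivAt (fun s => ⟪g s, x s⟫_𝕜) (⟪g t, x'⟫_𝕜 + ⟪x', g t⟫_𝕜) t := by
  have h := (hasDerivAt_inner_sub_self hg hx).add (hx.inner 𝕜 (hasDerivAt_const t (g t)))
  rw [inner_zero_right, zero_add] at h
  refine h.congr_of_eventuallyEq (Filter.Eventually.of_forall fun s => ?_)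
  rw [Pi.add_apply, inner_sub_right, hsym s t, sub_add_cancel]

theorem integral_re_inner_deriv_eq_zero (hsym : ∀ s t, ⟪g s, x t⟫_𝕜 = ⟪x s, g t⟫_𝕜)
    {x' : ℝ → E} {T : ℝ} (hx : ∀ t, HasDerivAt x (x' t) t) (hx' : Continuous x')
    (hg : Continuous g) (hxT : x T = x 0) (hgT : g T = g 0) :
    ∫ t in (0 : ℝ)..T, RCLike.re ⟪x' t, g t⟫_𝕜 = 0 := by
  have hderiv : ∀ t, HasDerivAt (fun s => RCLike.re ⟪g s, x s⟫_𝕜)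
      (2 * RCLike.re ⟪x' t, g t⟫_𝕜) t := by
    intro t
    have h := RCLike.reCLM.hasFDerivAt.comp_hasDerivAt t
      (hasDerivAt_inner_of_symm hsym hg.continuousAt (hx t))
    refine h.congr_deriv ?_
    rw [RCLike.reCLM_apply, map_add, inner_re_symm (x' t), two_mul]
  have hint : ∫ t in (0 : ℝ)..T, 2 * RCLike.re ⟪x' t, g t⟫_𝕜 = 0 := by
    rw [intervalIntegral.integral_eq_sub_of_hasDerivAt (fun t _ => hderiv t)
      ((continuous_const.mul (RCLike.continuous_re.comp (hx'.inner hg))).intervalIntegrable _ _),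
      hxT, hgT, sub_self]
  rw [intervalIntegral.integral_const_mul] at hint
  linarith

theorem integral_norm_sq_deriv_le_of_symm (hsym : ∀ s t, ⟪g s, x t⟫_𝕜 = ⟪x s, g t⟫_𝕜)
    {x' : ℝ → E} {T : ℝ} (hT : 0 ≤ T) (hx : ∀ t, HasDerivAt x (x' t) t) (hx' : Continuous x')
    (hg : Continuous g) (hxT : x T = x 0) (hgT : g T = g 0) :
    ∫ t in (0 : ℝ)..T, ‖x' t‖ ^ 2 ≤ ∫ t in (0 : ℝ)..T, ‖x' t + g t‖ ^ 2 := by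
  have hcross : Continuous fun t => 2 * RCLike.re ⟪x' t, g t⟫_𝕜 :=
    continuous_const.mul (RCLike.continuous_re.comp (hx'.inner hg))
  calc ∫ t in (0 : ℝ)..T, ‖x' t‖ ^ 2
      = ∫ t in (0 : ℝ)..T, (‖x' t‖ ^ 2 + 2 * RCLike.re ⟪x' t, g t⟫_𝕜) := by
        rw [intervalIntegral.integral_add (f := fun t => ‖x' t‖ ^ 2)
          ((hx'.norm.pow 2).intervalIntegrable 0 T) (hcross.intervalIntegrable _ _),
          intervalIntegral.integral_const_mul,
          integral_re_inner_deriv_eq_zero hsym hx hx' hg hxT hgT, mul_zero, add_zero]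
    _ ≤ ∫ t in (0 : ℝ)..T, ‖x' t + g t‖ ^ 2 := by
        refine intervalIntegral.integral_mono_on hT
          (((hx'.norm.pow 2).add hcross).intervalIntegrable _ _)
          (((hx'.add hg).norm.pow 2).intervalIntegrable _ _) fun t _ => ?_
        rw [norm_add_sq (𝕜 := 𝕜)]
        nlinarith [sq_nonneg ‖g t‖]

end SymmetricPath

theorem stmt_8_general {H : Type*} [NormedAddCommGroup H] [InnerProductSpace ℂ H] [CompleteSpace H]
    (A : H →ₗ.[ℂ] H) (hdense : Dense (A.domain : Set H)) (hsa : A.adjoint = A) :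
    ∃ C : ℝ, 0 < C ∧ ∀ (x x' y : ℝ → H) (hx : ∀ t, x t ∈ A.domain),
      Continuous x' → Continuous y →
      (∀ t, x (t + 2 * Real.pi) = x t) →
      (∀ t, HasDerivAt x (x' t) t) →
      (∀ t, x' t + A ⟨x t, hx t⟩ = y t) →
      (∫ t in (0:ℝ)..(2 * Real.pi), ‖x' t‖ ^ 2) ≤
        C * ∫ t in (0:ℝ)..(2 * Real.pi), ‖y t‖ ^ 2 := by
  refine ⟨1, one_pos, fun x x' y hx hx'c hyc hper hderiv heq => ?_⟩
  have hformal : A.IsFormalAdjoint A := by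
    simpa only [hsa] using A.adjoint_isFormalAdjoint hdense
  set g : ℝ → H := fun t => A ⟨x t, hx t⟩
  have hy : y = x' + g := funext fun t => (heq t).symm
  have hgc : Continuous g := by
    simpa only [hy, add_sub_cancel_left] using hyc.sub hx'c
  have hxT : x (2 * Real.pi) = x 0 := by simpa using hper 0
  have hgT : g (2 * Real.pi) = g 0 := by simp only [g, hxT]
  rw [one_mul, hy]
  exact integral_norm_sq_deriv_le_of_symm (fun s t => hformal ⟨x s, hx s⟩ ⟨x t, hx t⟩)
    Real.two_pi_pos.le hderiv hx'c hgc hxT hgT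

/-- Let `A : dom A ⊆ H → H` be an invertible self-adjoint operator on a
Hilbert space `H`.  For `x ∈ H¹(S¹, H) ∩ L²(S¹, dom A)` (here realized as a `2π`-periodic
differentiable path `x` with values in `dom A` and continuous derivative `x'`) satisfying
`(d/dt + A) x = y`, the estimate `‖dx/dt‖_{L²(S¹,H)} ≤ C ‖y‖_{L²(S¹,H)}` holds with a
constant `C` depending only on `A`. -/
theorem stmt_8 {H : Type*} [NormedAddCommGroup H] [InnerProductSpace ℂ H] [CompleteSpace H]
    (A : H →ₗ.[ℂ] H) (hdense : Dense (A.domain : Set H)) (hsa : A.adjoint = A)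
    (hinv : ∃ R : H →L[ℂ] H,
      (∀ x (hx : x ∈ A.domain), R (A ⟨x, hx⟩) = x) ∧
      (∀ y : H, ∃ hy : R y ∈ A.domain, A ⟨R y, hy⟩ = y)) :
    ∃ C : ℝ, 0 < C ∧ ∀ (x x' y : ℝ → H) (hx : ∀ t, x t ∈ A.domain),
      Continuous x' → Continuous y →
      (∀ t, x (t + 2 * Real.pi) = x t) →
      (∀ t, HasDerivAt x (x' t) t) →
      (∀ t, x' t + A ⟨x t, hx t⟩ = y t) →
      (∫ t in (0:ℝ)..(2 * Real.pi), ‖x' t‖ ^ 2) ≤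
        C * ∫ t in (0:ℝ)..(2 * Real.pi), ‖y t‖ ^ 2 :=
  stmt_8_general A hdense hsa
end

section
/- Let H be a Hilbert space and D : dom(D) → H a closed symmetric operator with adjoint D*. Equip the quotient space dom(D*)/dom(D) with the symplectic form ω([x],[y]) = ⟨D*x, y⟩ - ⟨x, D*y⟩ (well defined on the quotient). Then a subspace L ⊆ dom(D*)/dom(D) is Lagrangian for ω (i.e., equal to its ω-annihilator) if and only if the restriction of D* to the preimage of L in dom(D*) is a self-adjoint extension of D. -/
/-!
Write `T = D†` and `E` for the restriction of `T` to `W`. Since `D ≤ E ≤ T`, taking adjoints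
gives `E† ≤ D† = T`, so `E†` is again a restriction of `T`; its domain consists of those
`x ∈ dom T` that are `ω`-orthogonal to every `y ∈ W ∩ dom T`. Hence `E† = E` exactly when
the `ω`-annihilator of `W` in `dom T` is `W ∩ dom T`, i.e. when `W` is Lagrangian.
-/

open scoped LinearPMap

namespace LinearPMap

section Restriction

variable {R M N : Type*} [Ring R] [AddCommGroup M] [Module R M] [AddCommGroup N] [Module R N]

theorem le_domRestrict {f g : M →ₗ.[R] N} {S : Submodule R M} (hfg : f ≤ g)
    (hfS : f.domain ≤ S) : f ≤ g.domRestrict S :=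
  ⟨le_inf hfS hfg.1, fun _ y hxy =>
    (hfg.2 (y := ⟨y, y.2.2⟩) hxy).trans (domRestrict_le.2 rfl).symm⟩

theorem eq_of_le_of_le_of_domain_eq {f g h : M →ₗ.[R] N} (hf : f ≤ h) (hg : g ≤ h)
    (hdom : f.domain = g.domain) : f = g :=
  eq_of_le_of_domain_eq
    ⟨hdom.le, fun x _ hxy => (hf.2 (y := ⟨x, hf.1 x.2⟩) rfl).trans (hg.2 hxy.symm).symm⟩ hdom

end Restriction

section Adjoint

variable {𝕜 E F : Type*} [RCLike 𝕜] [NormedAddCommGroup E] [InnerProductSpace 𝕜 E]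
  [NormedAddCommGroup F] [InnerProductSpace 𝕜 F] [CompleteSpace E]

theorem adjoint_le_adjoint_of_le {S T : E →ₗ.[𝕜] F} (hS : Dense (S.domain : Set E))
    (hST : S ≤ T) : T† ≤ S† :=
  IsFormalAdjoint.le_adjoint hS fun x y => by
    rw [hST.2 (y := ⟨x, hST.1 x.2⟩) rfl]
    exact (adjoint_isFormalAdjoint (hS.mono hST.1)).symm _ y

theorem mem_adjoint_domain_iff_of_adjoint_le {S : E →ₗ.[𝕜] F} {T : F →ₗ.[𝕜] E}
    (hS : Dense (S.domain : Set E)) (hST : S† ≤ T) (x : T.domain) :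
    (x : F) ∈ S†.domain ↔ ∀ y : S.domain, inner 𝕜 (T x) (y : E) = inner 𝕜 (x : F) (S y) := by
  refine ⟨fun hx y => ?_, fun h => mem_adjoint_domain_of_exists _ ⟨T x, h⟩⟩
  rw [← hST.2 (x := ⟨x, hx⟩) rfl]
  exact adjoint_isFormalAdjoint hS _ y

end Adjoint

section Extension

variable {𝕜 H : Type*} [RCLike 𝕜] [NormedAddCommGroup H] [InnerProductSpace 𝕜 H]
  [CompleteSpace H]

theorem adjoint_domRestrict_eq_self_iff {D : H →ₗ.[𝕜] H} (hD : Dense (D.domain : Set H))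
    (hDD : D ≤ D†) {W : Submodule 𝕜 H} (hDW : D.domain ≤ W) :
    (D†.domRestrict W)† = D†.domRestrict W ↔
      ∀ x : D†.domain, ((∀ y : D†.domain, (y : H) ∈ W →
        inner 𝕜 (D† x) (y : H) = inner 𝕜 (x : H) (D† y)) ↔ (x : H) ∈ W) := by
  set T := D†
  set E := T.domRestrict W
  have hDE : D ≤ E := le_domRestrict hDD hDW
  have hET : E† ≤ T := adjoint_le_adjoint_of_le hD hDE
  have hmem (x : T.domain) : (x : H) ∈ E†.domain ↔
      ∀ y : T.domain, (y : H) ∈ W → inner 𝕜 (T x) (y : H) = inner 𝕜 (x : H) (T y) := by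
    rw [mem_adjoint_domain_iff_of_adjoint_le (hD.mono hDE.1) hET x]
    refine ⟨fun h y hy => ?_, fun h y => ?_⟩
    · rw [h ⟨y, hy, y.2⟩]
      exact congrArg _ (domRestrict_le.2 rfl)
    · rw [h ⟨y, y.2.2⟩ y.2.1]
      exact congrArg _ (domRestrict_le.2 rfl).symm
  have hdomain : E† = E ↔ E†.domain = W ⊓ T.domain :=
    ⟨congrArg domain, eq_of_le_of_le_of_domain_eq hET domRestrict_le⟩
  rw [hdomain]
  simp_rw [← hmem]
  refine ⟨fun h x => by rw [h]; exact and_iff_left x.2, fun h => ?_⟩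
  ext x
  exact ⟨fun hx => ⟨(h ⟨x, hET.1 hx⟩).1 hx, hET.1 hx⟩, fun ⟨hW, hT⟩ => (h ⟨x, hT⟩).2 hW⟩

end Extension

end LinearPMap

theorem stmt_14_general {H : Type*} [NormedAddCommGroup H] [InnerProductSpace ℂ H]
    [CompleteSpace H]
    (D : H →ₗ.[ℂ] H) (hdense : Dense (D.domain : Set H))
    (hsym : ∀ x y : D.domain, (inner ℂ (D x) (y : H) : ℂ) = inner ℂ (x : H) (D y))
    (W : Submodule ℂ H) (hDW : D.domain ≤ W) :
    ((∀ x y : D.adjoint.domain, (x : H) ∈ W → (y : H) ∈ W →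
        (inner ℂ (D.adjoint x) (y : H) : ℂ) - inner ℂ (x : H) (D.adjoint y) = 0) ∧
      (∀ x : D.adjoint.domain,
        (∀ y : D.adjoint.domain, (y : H) ∈ W →
          (inner ℂ (D.adjoint x) (y : H) : ℂ) - inner ℂ (x : H) (D.adjoint y) = 0) →
        (x : H) ∈ W))
    ↔ (D.adjoint.domRestrict W).adjoint = D.adjoint.domRestrict W := by
  have hDD : D ≤ D† := LinearPMap.IsFormalAdjoint.le_adjoint hdense hsym
  rw [LinearPMap.adjoint_domRestrict_eq_self_iff hdense hDD hDW]
  simp only [sub_eq_zero]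
  exact ⟨fun ⟨hiso, hcoiso⟩ x => ⟨hcoiso x, fun hx y hy => hiso x y hx hy⟩,
    fun h => ⟨fun x y hx hy => (h x).2 hx y hy, fun x => (h x).1⟩⟩

/-- von Neumann's correspondence.  Let `D` be a densely defined closed
symmetric operator on a Hilbert space `H`, with adjoint `D*`.  Equip
`dom(D*)/dom(D)` with the symplectic form `ω([x],[y]) = ⟨D*x, y⟩ - ⟨x, D*y⟩`.  A
subspace `L ⊆ dom(D*)/dom(D)` (realized here through its preimage `W` in `dom(D*)`,
a subspace with `dom D ≤ W ≤ dom D*`) is Lagrangian for `ω` (i.e. equal to its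
`ω`-annihilator) if and only if the restriction of `D*` to `W` is a self-adjoint
extension of `D`. -/
theorem stmt_14 {H : Type*} [NormedAddCommGroup H] [InnerProductSpace ℂ H]
    [CompleteSpace H]
    (D : H →ₗ.[ℂ] H) (hdense : Dense (D.domain : Set H))
    (hclosed : IsClosed (D.graph : Set (H × H)))
    (hsym : ∀ x y : D.domain, (inner ℂ (D x) (y : H) : ℂ) = inner ℂ (x : H) (D y))
    (W : Submodule ℂ H) (hDW : D.domain ≤ W) (hWD : W ≤ D.adjoint.domain) :
    ((∀ x y : D.adjoint.domain, (x : H) ∈ W → (y : H) ∈ W →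
        (inner ℂ (D.adjoint x) (y : H) : ℂ) - inner ℂ (x : H) (D.adjoint y) = 0) ∧
      (∀ x : D.adjoint.domain,
        (∀ y : D.adjoint.domain, (y : H) ∈ W →
          (inner ℂ (D.adjoint x) (y : H) : ℂ) - inner ℂ (x : H) (D.adjoint y) = 0) →
        (x : H) ∈ W))
    ↔ (D.adjoint.domRestrict W).adjoint = D.adjoint.domRestrict W :=
  stmt_14_general D hdense hsym W hDW
end

section
/- Let H be a Hilbert space and let D(t), t ∈ S¹, be a family of self-adjoint operators on H of the form D(t) = A + B(t) where A is a fixed invertible self-adjoint operator with domain W ⊆ H (compactly embedded), and t ↦ B(t) is a continuous family of bounded symmetric operators. Then the operator d/dt + D(t) : H¹(S¹,H) ∩ L²(S¹,W) → L²(S¹,H) satisfies the elliptic estimate ‖x‖_{H¹(S¹,H)} + ‖x‖_{L²(S¹,W)} ≤ C(‖(d/dt + D(t))x‖_{L²(S¹,H)} + ‖x‖_{L²(S¹,H)}). -/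
/-!
Pair the equation with itself: for periodic `x`, the symmetry of `A` makes
`t ↦ ⟪A x t, ι x t⟫` a primitive of `2 ⟪x', A x⟫`, so the cross term integrates to zero and
`‖x' + A x‖²_{L²} = ‖x'‖²_{L²} + ‖A x‖²_{L²}`. The bounded perturbation `B` costs only a
multiple of `‖ι x‖²_{L²}`, and `‖x‖_W ≤ ‖A⁻¹‖ ‖A x‖_H` converts the bound on `A x` into one on
the `W`-norm.
-/

open Filter Topology

section

variable {H W : Type*} [NormedAddCommGroup H] [InnerProductSpace ℝ H]
  [NormedAddCommGroup W] [NormedSpace ℝ W]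
  {ι A : W →L[ℝ] H} {x : ℝ → W} {x' : ℝ → H}

/-- The symmetry of `A` gives `ψ s - ψ t = ⟪ι x s - ι x t, A x s + A x t⟫` for
`ψ s = ⟪A x s, ι x s⟫`, so only the difference quotient of `ι ∘ x` is needed, never a
derivative of `x` in `W`. -/
theorem hasDerivAt_inner_apply_self
    (hA : ∀ v w : W, (inner ℝ (A v) (ι w) : ℝ) = inner ℝ (ι v) (A w))
    {t : ℝ} (hx : ContinuousAt x t) (hderiv : HasDerivAt (fun s => ι (x s)) (x' t) t) :
    HasDerivAt (fun s => (inner ℝ (A (x s)) (ι (x s)) : ℝ))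
      (2 * inner ℝ (x' t) (A (x t))) t := by
  have hdiff : ∀ s, (inner ℝ (A (x s)) (ι (x s)) : ℝ) - inner ℝ (A (x t)) (ι (x t)) =
      inner ℝ (ι (x s) - ι (x t)) (A (x s) + A (x t)) := by
    intro s
    simp only [inner_sub_left, inner_add_right, real_inner_comm (A (x s)) (ι (x s)),
      real_inner_comm (A (x t)) (ι (x t))]
    linarith [hA (x s) (x t), real_inner_comm (ι (x t)) (A (x s))]
  have hslope : slope (fun s => (inner ℝ (A (x s)) (ι (x s)) : ℝ)) t =
      fun s => inner ℝ (slope (fun s => ι (x s)) t s) (A (x s) + A (x t)) := by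
    ext s
    simp only [slope_def_module, hdiff, real_inner_smul_left, smul_eq_mul]
  have hsum : Tendsto (fun s => A (x s) + A (x t)) (𝓝[≠] t) (𝓝 (A (x t) + A (x t))) :=
    ((A.continuous.continuousAt.comp hx).add continuousAt_const).tendsto.mono_left
      nhdsWithin_le_nhds
  rw [hasDerivAt_iff_tendsto_slope, hslope]
  convert (hasDerivAt_iff_tendsto_slope.mp hderiv).inner hsum using 2
  rw [inner_add_right]
  ring

theorem integral_inner_deriv_apply_eq_zero
    (hA : ∀ v w : W, (inner ℝ (A v) (ι w) : ℝ) = inner ℝ (ι v) (A w))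
    (hx : Continuous x) (hx' : Continuous x')
    (hderiv : ∀ t, HasDerivAt (fun s => ι (x s)) (x' t) t) {a b : ℝ} (hxab : x a = x b) :
    ∫ t in a..b, (inner ℝ (x' t) (A (x t)) : ℝ) = 0 := by
  have hftc := intervalIntegral.integral_eq_sub_of_hasDerivAt
    (fun t _ => hasDerivAt_inner_apply_self hA hx.continuousAt (hderiv t))
    ((continuous_const.mul (hx'.inner (A.continuous.comp hx))).intervalIntegrable a b)
  rw [hxab, sub_self, intervalIntegral.integral_const_mul] at hftc
  exact (mul_eq_zero.mp hftc).resolve_left two_ne_zero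

theorem integral_norm_deriv_add_apply_sq
    (hA : ∀ v w : W, (inner ℝ (A v) (ι w) : ℝ) = inner ℝ (ι v) (A w))
    (hx : Continuous x) (hx' : Continuous x')
    (hderiv : ∀ t, HasDerivAt (fun s => ι (x s)) (x' t) t) {a b : ℝ} (hxab : x a = x b) :
    ∫ t in a..b, ‖x' t + A (x t)‖ ^ 2 =
      (∫ t in a..b, ‖x' t‖ ^ 2) + ∫ t in a..b, ‖A (x t)‖ ^ 2 := by
  simp_rw [norm_add_sq_real]
  rw [intervalIntegral.integral_add, intervalIntegral.integral_add,
    intervalIntegral.integral_const_mul, integral_inner_deriv_apply_eq_zero hA hx hx' hderiv hxab,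
    mul_zero, add_zero]
  all_goals exact Continuous.intervalIntegrable (by fun_prop) _ _

theorem integral_norm_deriv_sq_add_integral_norm_apply_sq_le
    (hA : ∀ v w : W, (inner ℝ (A v) (ι w) : ℝ) = inner ℝ (ι v) (A w))
    {B : ℝ → H →L[ℝ] H} (hB : Continuous B) {M : ℝ}
    (hx : Continuous x) (hx' : Continuous x')
    (hderiv : ∀ t, HasDerivAt (fun s => ι (x s)) (x' t) t) {a b : ℝ} (hab : a ≤ b)
    (hxab : x a = x b) (hM : ∀ t ∈ Set.Icc a b, ‖B t‖ ≤ M) :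
    (∫ t in a..b, ‖x' t‖ ^ 2) + ∫ t in a..b, ‖A (x t)‖ ^ 2 ≤
      2 * (∫ t in a..b, ‖x' t + A (x t) + B t (ι (x t))‖ ^ 2) +
        2 * M ^ 2 * ∫ t in a..b, ‖ι (x t)‖ ^ 2 := by
  have hpointwise : ∀ t ∈ Set.Icc a b, ‖x' t + A (x t)‖ ^ 2 ≤
      2 * ‖x' t + A (x t) + B t (ι (x t))‖ ^ 2 + 2 * M ^ 2 * ‖ι (x t)‖ ^ 2 := by
    intro t ht
    have hBx : ‖B t (ι (x t))‖ ≤ M * ‖ι (x t)‖ :=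
      (B t).le_of_opNorm_le (hM t ht) _
    have htriangle : ‖x' t + A (x t)‖ ≤
        ‖x' t + A (x t) + B t (ι (x t))‖ + M * ‖ι (x t)‖ :=
      (norm_le_add_norm_add _ (B t (ι (x t)))).trans (by gcongr)
    nlinarith [add_sq_le (a := ‖x' t + A (x t) + B t (ι (x t))‖) (b := M * ‖ι (x t)‖),
      norm_nonneg (x' t + A (x t))]
  rw [← integral_norm_deriv_add_apply_sq hA hx hx' hderiv hxab,
    ← intervalIntegral.integral_const_mul, ← intervalIntegral.integral_const_mul,
    ← intervalIntegral.integral_add]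
  · exact intervalIntegral.integral_mono_on hab (Continuous.intervalIntegrable (by fun_prop) _ _)
      (Continuous.intervalIntegrable (by fun_prop) _ _) hpointwise
  all_goals exact Continuous.intervalIntegrable (by fun_prop) _ _

theorem integral_norm_sq_le_of_leftInverse {Ainv : H →L[ℝ] W} (hAinv : ∀ w, Ainv (A w) = w)
    (hx : Continuous x) {a b : ℝ} (hab : a ≤ b) :
    ∫ t in a..b, ‖x t‖ ^ 2 ≤ ‖Ainv‖ ^ 2 * ∫ t in a..b, ‖A (x t)‖ ^ 2 := by
  rw [← intervalIntegral.integral_const_mul]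
  refine intervalIntegral.integral_mono_on hab (Continuous.intervalIntegrable (by fun_prop) _ _)
    (Continuous.intervalIntegrable (by fun_prop) _ _) fun t _ => ?_
  have h := Ainv.le_opNorm (A (x t))
  rw [hAinv] at h
  rw [← mul_pow]
  gcongr

end

theorem stmt_19_general {H W : Type*}
    [NormedAddCommGroup H] [InnerProductSpace ℝ H]
    [NormedAddCommGroup W] [InnerProductSpace ℝ W]
    (ι : W →L[ℝ] H)
    (A : W →L[ℝ] H)
    (hAsym : ∀ v w : W, (inner ℝ (A v) (ι w) : ℝ) = inner ℝ (ι v) (A w))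
    (Ainv : H →L[ℝ] W) (hAinv₂ : ∀ w, Ainv (A w) = w)
    (B : ℝ → (H →L[ℝ] H)) (hBcont : Continuous B) :
    ∃ C : ℝ, 0 < C ∧ ∀ (x : ℝ → W) (x' : ℝ → H),
      Continuous x → Continuous x' →
      (∀ t, x (t + 2 * Real.pi) = x t) →
      (∀ t, HasDerivAt (fun s => ι (x s)) (x' t) t) →
      (∫ t in (0:ℝ)..(2 * Real.pi), (‖ι (x t)‖ ^ 2 + ‖x' t‖ ^ 2 + ‖x t‖ ^ 2)) ≤
        C * ((∫ t in (0:ℝ)..(2 * Real.pi), ‖x' t + A (x t) + B t (ι (x t))‖ ^ 2) +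
          ∫ t in (0:ℝ)..(2 * Real.pi), ‖ι (x t)‖ ^ 2) := by
  obtain ⟨M, hM⟩ := isCompact_Icc.exists_bound_of_continuousOn hBcont.continuousOn
  refine ⟨2 * (1 + ‖Ainv‖ ^ 2) * (1 + M ^ 2) + 1, by positivity, ?_⟩
  intro x x' hx hx' hper hderiv
  have h2π : (0 : ℝ) ≤ 2 * Real.pi := by positivity
  have henergy := integral_norm_deriv_sq_add_integral_norm_apply_sq_le hAsym hBcont hx hx'
    hderiv h2π (by simpa using (hper 0).symm) hM
  have hW := integral_norm_sq_le_of_leftInverse hAinv₂ hx h2π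
  rw [intervalIntegral.integral_add, intervalIntegral.integral_add]
  · set K := ‖Ainv‖
    have hnonneg : ∀ f : ℝ → ℝ, 0 ≤ ∫ t in (0 : ℝ)..(2 * Real.pi), f t ^ 2 := fun f =>
      intervalIntegral.integral_nonneg h2π fun t _ => sq_nonneg (f t)
    have hf := hnonneg fun t => ‖x' t + A (x t) + B t (ι (x t))‖
    have hιx := hnonneg fun t => ‖ι (x t)‖
    have hx'sq := hnonneg fun t => ‖x' t‖
    have hAxsq := hnonneg fun t => ‖A (x t)‖
    nlinarith [mul_le_mul_of_nonneg_left henergy (by positivity : (0 : ℝ) ≤ 1 + K ^ 2),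
      mul_nonneg (sq_nonneg K) hx'sq, mul_nonneg (sq_nonneg K) hιx,
      mul_nonneg (sq_nonneg M) hf, mul_nonneg (mul_nonneg (sq_nonneg K) (sq_nonneg M)) hf]
  all_goals exact Continuous.intervalIntegrable (by fun_prop) _ _

/-- Let `H` be a Hilbert space and `D(t) = A + B(t)`, `t ∈ S¹`, a family
of self-adjoint operators, where `A` is a fixed invertible self-adjoint operator with
domain `W ⊆ H` (compactly embedded via `ι`), and `t ↦ B(t)` is a continuous (periodic)
family of bounded symmetric operators.  Then the operator
`d/dt + D(t) : H¹(S¹,H) ∩ L²(S¹,W) → L²(S¹,H)` satisfies the elliptic estimate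
`‖x‖_{H¹(S¹,H)} + ‖x‖_{L²(S¹,W)} ≤ C (‖(d/dt + D(t)) x‖_{L²(S¹,H)} + ‖x‖_{L²(S¹,H)})`. -/
theorem stmt_19 {H W : Type*}
    [NormedAddCommGroup H] [InnerProductSpace ℝ H] [CompleteSpace H]
    [NormedAddCommGroup W] [InnerProductSpace ℝ W] [CompleteSpace W]
    (ι : W →L[ℝ] H) (hι : Function.Injective ι) (hιdense : DenseRange ι)
    (hιcompact : IsCompactOperator (⇑ι))
    (A : W →L[ℝ] H)
    (hAsym : ∀ v w : W, (inner ℝ (A v) (ι w) : ℝ) = inner ℝ (ι v) (A w))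
    (Ainv : H →L[ℝ] W) (hAinv₁ : ∀ h, A (Ainv h) = h) (hAinv₂ : ∀ w, Ainv (A w) = w)
    (B : ℝ → (H →L[ℝ] H)) (hBcont : Continuous B)
    (hBper : ∀ t, B (t + 2 * Real.pi) = B t)
    (hBsym : ∀ t, ∀ x y : H, (inner ℝ (B t x) y : ℝ) = inner ℝ x (B t y)) :
    ∃ C : ℝ, 0 < C ∧ ∀ (x : ℝ → W) (x' : ℝ → H),
      Continuous x → Continuous x' →
      (∀ t, x (t + 2 * Real.pi) = x t) →
      (∀ t, HasDerivAt (fun s => ι (x s)) (x' t) t) →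
      (∫ t in (0:ℝ)..(2 * Real.pi), (‖ι (x t)‖ ^ 2 + ‖x' t‖ ^ 2 + ‖x t‖ ^ 2)) ≤
        C * ((∫ t in (0:ℝ)..(2 * Real.pi), ‖x' t + A (x t) + B t (ι (x t))‖ ^ 2) +
          ∫ t in (0:ℝ)..(2 * Real.pi), ‖ι (x t)‖ ^ 2) :=
  stmt_19_general ι A hAsym Ainv hAinv₂ B hBcont
end
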